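/- Let t ≥ 1 be an integer. A signed (2t+1)-regular graph (G,σ) admits a nowhere-zero (2 + 1/t)-flow if and only if (G,σ) admits a modular nowhere-zero (2 + 1/t)-flow and G has a t-factor. -/

import Mathlib

open Finset

/-- A finite loopless multigraph with vertex type `V` and edge type `E`;
`ends e` is the unordered pair of the two distinct endpoints of the edge `e`. -/
structure Multigraph (V E : Type) where
  ends : E → Sym2 V
  not_loop : ∀ e, ¬ (ends e).IsDiag

namespace Multigraph

variable {V E : Type} [Fintype V] [Fintype E] [DecidableEq V] [DecidableEq E]

/-- The edge `e` is incident with the vertex `v`. -/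
def Inc (G : Multigraph V E) (v : V) (e : E) : Prop := v ∈ G.ends e

instance (G : Multigraph V E) (v : V) (e : E) : Decidable (G.Inc v e) :=
  inferInstanceAs (Decidable (v ∈ G.ends e))

/-- The set of edges incident with `v`. -/
def incEdges (G : Multigraph V E) (v : V) : Finset E :=
  Finset.univ.filter fun e => G.Inc v e

/-- The degree of a vertex. -/
def degree (G : Multigraph V E) (v : V) : ℕ := (G.incEdges v).card

/-- `G` is `k`-regular. -/
def IsRegular (G : Multigraph V E) (k : ℕ) : Prop := ∀ v, G.degree v = k

/-- The set `N_σ` of negative edges of a signature `σ : E → ℤˣ`. -/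
def negEdges (G : Multigraph V E) (σ : E → ℤˣ) : Finset E :=
  Finset.univ.filter fun e => σ e = -1

/-- `τ` assigns a sign to every half-edge (i.e. to each edge at each of its endpoints);
it is an orientation of the signed graph `(G, σ)` if for every edge `e = uv` the two
half-edge signs multiply to `-σ e`. -/
def IsOrientation (G : Multigraph V E) (σ : E → ℤˣ) (τ : E → V → ℤˣ) : Prop :=
  ∀ e u v, G.ends e = s(u, v) → τ e u * τ e v = - σ e

/-- The boundary `δf(v) = ∑_{h at v} τ(h) f(e_h)` of `f` at `v`. -/
def boundary {R : Type} [CommRing R] (G : Multigraph V E) (τ : E → V → ℤˣ)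
    (f : E → R) (v : V) : R :=
  ∑ e ∈ G.incEdges v, (((τ e v : ℤˣ) : ℤ) : R) * f e

/-- `f` is a nowhere-zero `r`-flow on the signed graph `(G, σ)`:
for some orientation all boundaries vanish and `1 ≤ |f e| ≤ r - 1` for every edge. -/
def IsNZFlow (G : Multigraph V E) (σ : E → ℤˣ) (r : ℝ) (f : E → ℝ) : Prop :=
  ∃ τ, G.IsOrientation σ τ ∧ (∀ v, G.boundary τ f v = 0) ∧
    ∀ e, 1 ≤ |f e| ∧ |f e| ≤ r - 1

/-- `(G, σ)` admits a nowhere-zero `r`-flow. -/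
def HasNZFlow (G : Multigraph V E) (σ : E → ℤˣ) (r : ℝ) : Prop :=
  ∃ f, G.IsNZFlow σ r f

/-- `f` is a modular nowhere-zero `r`-flow on `(G, σ)`: for some orientation all
boundaries are `≡ 0 (mod r)` and `1 ≤ |f e| ≤ r - 1` for every edge. -/
def IsModularNZFlow (G : Multigraph V E) (σ : E → ℤˣ) (r : ℝ) (f : E → ℝ) : Prop :=
  ∃ τ, G.IsOrientation σ τ ∧ (∀ v, ∃ k : ℤ, G.boundary τ f v = k * r) ∧
    ∀ e, 1 ≤ |f e| ∧ |f e| ≤ r - 1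

/-- `f` is an integer-valued nowhere-zero `n`-flow on `(G, σ)`. -/
def IsIntNZFlow (G : Multigraph V E) (σ : E → ℤˣ) (n : ℕ) (f : E → ℤ) : Prop :=
  ∃ τ, G.IsOrientation σ τ ∧ (∀ v, G.boundary τ f v = 0) ∧
    ∀ e, 1 ≤ |f e| ∧ |f e| ≤ (n : ℤ) - 1

/-- `(G, σ)` admits an integer nowhere-zero `n`-flow. -/
def HasIntNZFlow (G : Multigraph V E) (σ : E → ℤˣ) (n : ℕ) : Prop :=
  ∃ f, G.IsIntNZFlow σ n f

/-- `(G, σ)` is flow-admissible: it has a nowhere-zero `r`-flow for some `r ≥ 2`. -/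
def FlowAdmissible (G : Multigraph V E) (σ : E → ℤˣ) : Prop :=
  ∃ r : ℝ, 2 ≤ r ∧ G.HasNZFlow σ r

/-- The circular flow number `F_c(G, σ)` (the least `r` admitting a nowhere-zero `r`-flow). -/
noncomputable def Fc (G : Multigraph V E) (σ : E → ℤˣ) : ℝ :=
  sInf {r : ℝ | 2 ≤ r ∧ G.HasNZFlow σ r}

/-- The integer flow number `F(G, σ)` (the least `n` admitting an integer
nowhere-zero `n`-flow). -/
noncomputable def Fi (G : Multigraph V E) (σ : E → ℤˣ) : ℕ :=
  sInf {n : ℕ | G.HasIntNZFlow σ n}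

/-- The flow spectrum `S(G)` of `G`. -/
def Spectrum (G : Multigraph V E) : Set ℝ :=
  {r | ∃ σ : E → ℤˣ, G.FlowAdmissible σ ∧ G.Fc σ = r}

/-- The integer flow spectrum `S̄(G)` of `G`. -/
def IntSpectrum (G : Multigraph V E) : Set ℕ :=
  {n | ∃ σ : E → ℤˣ, G.FlowAdmissible σ ∧ G.Fi σ = n}

/-- `F` is the edge set of a spanning `t`-regular subgraph (a `t`-factor) of `G`. -/
def IsFactor (G : Multigraph V E) (t : ℕ) (F : Finset E) : Prop :=
  ∀ v, (G.incEdges v ∩ F).card = t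

/-- `G` has a `t`-factor. -/
def HasFactor (G : Multigraph V E) (t : ℕ) : Prop := ∃ F, G.IsFactor t F

/-- `G - X` is bipartite. -/
def BipartiteOff (G : Multigraph V E) (X : Finset E) : Prop :=
  ∃ c : V → Bool, ∀ e ∉ X, ∀ u v, G.ends e = s(u, v) → c u ≠ c v

/-- `G` is bipartite. -/
def Bipartite (G : Multigraph V E) : Prop := G.BipartiteOff ∅

/-- `X` is an `r`-minimal set: some signature `σ` with `N_σ = X` has circular flow
number `r`, while no signature whose negative edge set is a proper subset of `X`
has circular flow number `r`. -/
def IsRMinimal (G : Multigraph V E) (r : ℝ) (X : Finset E) : Prop :=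
  (∃ σ, G.negEdges σ = X ∧ G.FlowAdmissible σ ∧ G.Fc σ = r) ∧
  ∀ σ, G.negEdges σ ⊂ X → ¬ (G.FlowAdmissible σ ∧ G.Fc σ = r)

/-- `X` is an `r`-minimal set of minimum cardinality. -/
def IsSmallestRMinimal (G : Multigraph V E) (r : ℝ) (X : Finset E) : Prop :=
  G.IsRMinimal r X ∧ ∀ Y, G.IsRMinimal r Y → X.card ≤ Y.card

end Multigraph

open Multigraph

/-!
Write `r = 2 + 1/t` and reverse edges so that all flow values lie in `[1, 1 + 1/t]`. At a vertex
of degree `2t + 1`, replacing every value `f e` that enters the boundary with sign `-1` by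
`r - f e` yields `2t + 1` numbers in `[1, 1 + 1/t]` whose sum is a multiple of `r`. Since
`(2t + 1) * 1 = t r` and `(2t + 1) (1 + 1/t) = (t + 1) r`, they are all `1` or all `1 + 1/t`:
the value `1 + 1/t` sits exactly on the half-edges of one sign `s v`. For a genuine flow this
forces exactly `t` such edges at `v`, hence a `t`-factor. For a modular flow, the two ends of an
edge agree on whether it carries `1 + 1/t`, so `σ(uv) = -s(u) s(v)`; then `1 + 1/t` on a
`t`-factor and `1` elsewhere, with half-edge signs `±s(v)`, is a flow.
-/

theorem Int.units_mul_eq_mul_of_eq_iff {a b c d : ℤˣ} (h : a = c ↔ b = d) : a * b = c * d := by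
  revert a b c d
  decide

theorem Finset.forall_eq_or_forall_eq_of_sum_eq_int_mul {ι K : Type*} [Field K] [LinearOrder K]
    [IsStrictOrderedRing K] {s : Finset ι} {y : ι → K} {lo hi r : K} {m k : ℤ} (hr : 0 < r)
    (hy : ∀ i ∈ s, lo ≤ y i ∧ y i ≤ hi) (hlo : #s * lo = m * r) (hhi : #s * hi = (m + 1) * r)
    (hsum : ∑ i ∈ s, y i = k * r) :
    (∀ i ∈ s, y i = lo) ∨ (∀ i ∈ s, y i = hi) := by
  have hsum_lo : ∑ _i ∈ s, lo = m * r := by rw [sum_const, nsmul_eq_mul, hlo]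
  have hsum_hi : ∑ _i ∈ s, hi = (m + 1) * r := by rw [sum_const, nsmul_eq_mul, hhi]
  have hmk : (m : K) * r ≤ k * r :=
    hsum_lo ▸ hsum ▸ sum_le_sum fun i hi => (hy i hi).1
  have hkm : (k : K) * r ≤ (m + 1) * r :=
    hsum_hi ▸ hsum ▸ sum_le_sum fun i hi => (hy i hi).2
  have hmk' : m ≤ k := by exact_mod_cast le_of_mul_le_mul_right hmk hr
  have hkm' : k ≤ m + 1 := by exact_mod_cast le_of_mul_le_mul_right hkm hr
  obtain rfl | rfl : k = m ∨ k = m + 1 := by omega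
  · left
    intro i hi
    exact ((sum_eq_sum_iff_of_le fun i hi => (hy i hi).1).mp (hsum_lo.trans hsum.symm) i hi).symm
  · right
    push_cast at hsum
    exact (sum_eq_sum_iff_of_le fun i hi => (hy i hi).2).mp (hsum.trans hsum_hi.symm)

namespace Multigraph

variable {V E : Type} {G : Multigraph V E}

theorem IsOrientation.mul_left {σ : E → ℤˣ} {τ : E → V → ℤˣ} (hτ : G.IsOrientation σ τ)
    (ε : E → ℤˣ) : G.IsOrientation σ fun e v => ε e * τ e v := by
  intro e u v h
  rw [mul_mul_mul_comm, Int.units_mul_self, one_mul, hτ e u v h]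

variable [Fintype E] [DecidableEq V]

theorem mem_incEdges {v : V} {e : E} : e ∈ G.incEdges v ↔ v ∈ G.ends e := by
  rw [incEdges, Finset.mem_filter]
  exact and_iff_right (mem_univ e)

theorem IsOrientation.exists_boundary_abs {σ : E → ℤˣ} {τ : E → V → ℤˣ}
    (hτ : G.IsOrientation σ τ) (f : E → ℝ) :
    ∃ τ', G.IsOrientation σ τ' ∧ ∀ v, G.boundary τ' (fun e => |f e|) v = G.boundary τ f v := by
  refine ⟨_, hτ.mul_left fun e => if 0 ≤ f e then 1 else -1, fun v => sum_congr rfl fun e _ => ?_⟩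
  by_cases hf : 0 ≤ f e
  · simp [hf, abs_of_nonneg hf]
  · simp [hf, abs_of_neg (not_le.mp hf)]

theorem boundary_eq_of_eq_ite {R : Type} [CommRing R] {τ : E → V → ℤˣ} {f : E → R} {v : V}
    {s : ℤˣ} {a b : R} (hf : ∀ e ∈ G.incEdges v, f e = if τ e v = s then a else b) :
    G.boundary τ f v = ((s : ℤ) : R) *
      (#{e ∈ G.incEdges v | τ e v = s} * a - #{e ∈ G.incEdges v | τ e v ≠ s} * b) := by
  have hterm : ∀ e ∈ G.incEdges v, ((τ e v : ℤ) : R) * f e =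
      if τ e v = s then ((s : ℤ) : R) * a else -(((s : ℤ) : R) * b) := by
    intro e he
    rw [hf e he]
    split_ifs with h
    · rw [h]
    · rw [Int.units_ne_iff_eq_neg.mp h]
      push_cast
      ring
  rw [boundary, sum_congr rfl hterm, sum_ite, sum_const, sum_const, nsmul_eq_mul, nsmul_eq_mul]
  ring

theorem exists_eq_ite_of_boundary_eq_int_mul {t : ℕ} (ht : 0 < t) {τ : E → V → ℤˣ} {f : E → ℝ}
    {v : V} (hdeg : G.degree v = 2 * t + 1)
    (hf : ∀ e ∈ G.incEdges v, 1 ≤ f e ∧ f e ≤ 1 + 1 / (t : ℝ)) {k : ℤ}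
    (hk : G.boundary τ f v = k * (2 + 1 / (t : ℝ))) :
    ∃ s : ℤˣ, ∀ e ∈ G.incEdges v, f e = if τ e v = s then 1 + 1 / (t : ℝ) else 1 := by
  -- Mod `2 + 1/t`, each term `τ e v * f e` is congruent to some `y e ∈ [1, 1 + 1/t]`.
  set y : E → ℝ := fun e => if τ e v = 1 then f e else 2 + 1 / (t : ℝ) - f e with hy
  have hy_eq : ∀ e, y e = (τ e v : ℤ) * f e + if τ e v = 1 then 0 else 2 + 1 / (t : ℝ) := by
    intro e
    rcases Int.units_eq_one_or (τ e v) with h | h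
    · simp [hy, h]
    · simp [hy, h]
      ring
  have hsum : ∑ e ∈ G.incEdges v, y e =
      (k + #{e ∈ G.incEdges v | τ e v ≠ 1} : ℤ) * (2 + 1 / (t : ℝ)) := by
    simp only [hy_eq, sum_add_distrib, sum_ite, sum_const_zero, sum_const, nsmul_eq_mul]
    rw [← boundary, hk]
    push_cast
    ring
  have hy_mem : ∀ e ∈ G.incEdges v, 1 ≤ y e ∧ y e ≤ 1 + 1 / (t : ℝ) := by
    intro e he
    have := hf e he
    simp only [hy]
    split_ifs <;> constructor <;> linarith
  have hdegR : (#(G.incEdges v) : ℝ) = 2 * t + 1 := by exact_mod_cast hdeg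
  rcases forall_eq_or_forall_eq_of_sum_eq_int_mul (m := t) (by positivity) hy_mem
    (by rw [hdegR]; field_simp; push_cast; ring)
    (by rw [hdegR]; field_simp; push_cast; ring) hsum with hlo | hhi
  · refine ⟨-1, fun e he => ?_⟩
    have := hlo e he
    rcases Int.units_eq_one_or (τ e v) with h | h <;> simp [hy, h] at this ⊢ <;> linarith
  · refine ⟨1, fun e he => ?_⟩
    have := hhi e he
    rcases Int.units_eq_one_or (τ e v) with h | h <;> simp [hy, h] at this ⊢ <;> linarith

theorem boundary_eq_zero_iff_card_eq {t : ℕ} (ht : 0 < t) {τ : E → V → ℤˣ} {f : E → ℝ}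
    {v : V} {s : ℤˣ} (hdeg : G.degree v = 2 * t + 1)
    (hf : ∀ e ∈ G.incEdges v, f e = if τ e v = s then 1 + 1 / (t : ℝ) else 1) :
    G.boundary τ f v = 0 ↔ #{e ∈ G.incEdges v | τ e v = s} = t := by
  have hcard := card_filter_add_card_filter_not (s := G.incEdges v) (fun e => τ e v = s)
  rw [← degree, hdeg] at hcard
  have hc' : (#{e ∈ G.incEdges v | τ e v ≠ s} : ℝ) =
      2 * t + 1 - #{e ∈ G.incEdges v | τ e v = s} := by
    rw [eq_sub_iff_add_eq']
    exact_mod_cast hcard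
  have htR : (t : ℝ) ≠ 0 := by positivity
  have hs : ((s : ℤ) : ℝ) ≠ 0 := by rcases Int.units_eq_one_or s with h | h <;> simp [h]
  have hr : (2 + 1 / t : ℝ) ≠ 0 := by positivity
  have key : G.boundary τ f v =
      (s : ℤ) * ((#{e ∈ G.incEdges v | τ e v = s} : ℝ) - t) * (2 + 1 / t) := by
    rw [boundary_eq_of_eq_ite hf, hc']
    field_simp
    ring
  rw [key, mul_eq_zero, mul_eq_zero, or_iff_right hs, or_iff_left hr, sub_eq_zero, Nat.cast_inj]

variable {t : ℕ} {σ : E → ℤˣ}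

theorem IsNZFlow.isModularNZFlow {r : ℝ} {f : E → ℝ} (hf : G.IsNZFlow σ r f) :
    G.IsModularNZFlow σ r f :=
  let ⟨τ, hτ, hδ, hb⟩ := hf
  ⟨τ, hτ, fun v => ⟨0, by simp [hδ v]⟩, hb⟩

theorem IsNZFlow.hasFactor [DecidableEq E] (ht : 0 < t) (hreg : G.IsRegular (2 * t + 1))
    {f : E → ℝ} (hf : G.IsNZFlow σ (2 + 1 / (t : ℝ)) f) : G.HasFactor t := by
  obtain ⟨τ, hτ, hδ, hb⟩ := hf
  obtain ⟨τ', -, hτ'⟩ := hτ.exists_boundary_abs f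
  have habs : ∀ e, 1 ≤ |f e| ∧ |f e| ≤ 1 + 1 / (t : ℝ) :=
    fun e => ⟨(hb e).1, by linarith [(hb e).2]⟩
  refine ⟨univ.filter fun e => |f e| = 1 + 1 / (t : ℝ), fun v => ?_⟩
  have hδ' : G.boundary τ' (fun e => |f e|) v = (0 : ℤ) * (2 + 1 / (t : ℝ)) := by
    rw [hτ', hδ v]
    simp
  obtain ⟨s, hs⟩ := exists_eq_ite_of_boundary_eq_int_mul ht (hreg v) (fun e _ => habs e) hδ'
  have hF : G.incEdges v ∩ univ.filter (fun e => |f e| = 1 + 1 / (t : ℝ)) =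
      {e ∈ G.incEdges v | τ' e v = s} := by
    ext e
    simp only [mem_inter, mem_filter, and_congr_right_iff]
    intro he
    rw [hs e he]
    split_ifs with h <;> simp [h, ht.ne']
  rw [hF, ← boundary_eq_zero_iff_card_eq ht (hreg v) hs, hτ', hδ v]

theorem IsModularNZFlow.exists_isOrientation_const (ht : 0 < t)
    (hreg : G.IsRegular (2 * t + 1)) {f : E → ℝ} (hf : G.IsModularNZFlow σ (2 + 1 / (t : ℝ)) f) :
    ∃ s : V → ℤˣ, G.IsOrientation σ fun _ v => s v := by
  obtain ⟨τ, hτ, hδ, hb⟩ := hf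
  obtain ⟨τ', hτ', hbd⟩ := hτ.exists_boundary_abs f
  have habs : ∀ e, 1 ≤ |f e| ∧ |f e| ≤ 1 + 1 / (t : ℝ) :=
    fun e => ⟨(hb e).1, by linarith [(hb e).2]⟩
  choose s hs using fun v =>
    let ⟨_, hk⟩ := hδ v
    exists_eq_ite_of_boundary_eq_int_mul ht (hreg v) (fun e _ => habs e) ((hbd v).trans hk)
  refine ⟨s, fun e u w huw => ?_⟩
  have hu : e ∈ G.incEdges u := mem_incEdges.mpr (huw ▸ Sym2.mem_mk_left u w)
  have hw : e ∈ G.incEdges w := mem_incEdges.mpr (huw ▸ Sym2.mem_mk_right u w)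
  have hends : τ' e u = s u ↔ τ' e w = s w := by
    have := (hs u e hu).symm.trans (hs w e hw)
    by_cases hu' : τ' e u = s u <;> by_cases hw' : τ' e w = s w <;>
      simp [hu', hw', ht.ne'] at this ⊢
  rw [← Int.units_mul_eq_mul_of_eq_iff hends, hτ' e u w huw]

theorem hasNZFlow_of_isOrientation_const_of_isFactor [DecidableEq E] (ht : 0 < t)
    (hreg : G.IsRegular (2 * t + 1)) {s : V → ℤˣ} (hs : G.IsOrientation σ fun _ v => s v)
    {F : Finset E} (hF : G.IsFactor t F) : G.HasNZFlow σ (2 + 1 / (t : ℝ)) := by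
  have hpos : (0 : ℝ) < 1 / t := by positivity
  refine ⟨fun e => if e ∈ F then 1 + 1 / (t : ℝ) else 1,
    _, hs.mul_left fun e => if e ∈ F then 1 else -1, fun v => ?_, fun e => ?_⟩
  · have hval : ∀ e ∈ G.incEdges v, (if e ∈ F then 1 + 1 / (t : ℝ) else 1) =
        if (if e ∈ F then 1 else -1) * s v = s v then 1 + 1 / (t : ℝ) else 1 := by
      intro e _
      by_cases h : e ∈ F <;> simp [h]
    rw [boundary_eq_zero_iff_card_eq ht (hreg v) hval, ← hF v, ← filter_mem_eq_inter]
    congr 1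
    ext e
    by_cases h : e ∈ F <;> simp [h]
  · by_cases h : e ∈ F
    · simp only [h, if_true, abs_of_pos (by positivity : (0 : ℝ) < 1 + 1 / t)]
      constructor <;> linarith
    · simp only [h, if_false, abs_one]
      constructor <;> linarith

end Multigraph

theorem stmt3_general {V E : Type} [Fintype E] [DecidableEq V] [DecidableEq E]
    (t : ℕ) (ht : 1 ≤ t) (G : Multigraph V E) (σ : E → ℤˣ)
    (hreg : G.IsRegular (2 * t + 1)) :
    G.HasNZFlow σ (2 + 1 / (t : ℝ)) ↔
      (∃ f, G.IsModularNZFlow σ (2 + 1 / (t : ℝ)) f) ∧ G.HasFactor t := by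
  constructor
  · rintro ⟨f, hf⟩
    exact ⟨⟨f, hf.isModularNZFlow⟩, hf.hasFactor ht hreg⟩
  · rintro ⟨⟨f, hf⟩, F, hF⟩
    obtain ⟨s, hs⟩ := hf.exists_isOrientation_const ht hreg
    exact hasNZFlow_of_isOrientation_const_of_isFactor ht hreg hs hF

/-- Let `t ≥ 1`.  A signed `(2t+1)`-regular graph `(G, σ)` admits a nowhere-zero
`(2 + 1/t)`-flow if and only if `(G, σ)` admits a modular nowhere-zero
`(2 + 1/t)`-flow and `G` has a `t`-factor. -/
theorem stmt3 {V E : Type} [Fintype V] [Fintype E] [DecidableEq V] [DecidableEq E]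
    (t : ℕ) (ht : 1 ≤ t) (G : Multigraph V E) (σ : E → ℤˣ)
    (hreg : G.IsRegular (2 * t + 1)) :
    G.HasNZFlow σ (2 + 1 / (t : ℝ)) ↔
      (∃ f, G.IsModularNZFlow σ (2 + 1 / (t : ℝ)) f) ∧ G.HasFactor t :=
  stmt3_general t ht G σ hreg
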